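/- arXiv:2301.11038 — 5 statements merged into one kernel-verified Lean document; each statement's English description precedes it below -/
import Mathlib

section
/- The function φ(s) = (∫₀^s sinh(u)^{n-1} du) / sinh(s)^{n-1}, extended by φ(0) = 0, satisfies φ'(s) > 0 for all s in (0, s0]. -/
/-!
Write `I(s) = ∫₀ˢ sinh^m` with `m = n - 1`. The quotient rule gives
`φ' = 1 - m cosh(s) I(s) / sinh(s)^(m+1)`, so everything reduces to
`m cosh(s) I(s) < sinh(s)^(m+1)` for `s > 0`. This follows because
`sinh^(m+1)/cosh - m I` vanishes at `0` and has derivative `sinh^m / cosh² > 0` on `(0, ∞)`.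
-/

open Real Set

noncomputable def sinhPowIntegral (m : ℕ) (s : ℝ) : ℝ := ∫ u in (0 : ℝ)..s, sinh u ^ m

namespace sinhPowIntegral

variable (m : ℕ)

@[simp]
theorem zero_right : sinhPowIntegral m 0 = 0 := intervalIntegral.integral_same

theorem hasDerivAt (t : ℝ) : HasDerivAt (sinhPowIntegral m) (sinh t ^ m) t :=
  have hc : Continuous fun u => sinh u ^ m := continuous_sinh.pow m
  intervalIntegral.integral_hasDerivAt_right (hc.intervalIntegrable _ _)
    (hc.stronglyMeasurableAtFilter _ _) hc.continuousAt

theorem continuous : Continuous (sinhPowIntegral m) :=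
  continuous_iff_continuousAt.2 fun t => (hasDerivAt m t).continuousAt

theorem hasDerivAt_sinh_pow_succ_div_cosh_sub (t : ℝ) :
    HasDerivAt (fun x => sinh x ^ (m + 1) / cosh x - m * sinhPowIntegral m x)
      (sinh t ^ m / cosh t ^ 2) t := by
  refine (((hasDerivAt_sinh t).fun_pow (m + 1)).fun_div (hasDerivAt_cosh t)
    (cosh_pos t).ne').sub ((hasDerivAt m t).const_mul (m : ℝ)) |>.congr_deriv ?_
  field_simp
  push_cast
  linear_combination sinh t ^ m * cosh_sq t

theorem strictMonoOn_sinh_pow_succ_div_cosh_sub :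
    StrictMonoOn (fun x => sinh x ^ (m + 1) / cosh x - m * sinhPowIntegral m x) (Ici 0) := by
  refine strictMonoOn_of_deriv_pos (convex_Ici 0) ?_ fun t ht => ?_
  · exact ((continuous_sinh.pow _).div continuous_cosh fun x => (cosh_pos x).ne').continuousOn.sub
      (continuous_const.mul (continuous m)).continuousOn
  · rw [interior_Ici] at ht
    rw [(hasDerivAt_sinh_pow_succ_div_cosh_sub m t).deriv]
    have : 0 < sinh t := sinh_pos_iff.2 ht
    positivity

theorem mul_cosh_mul_lt_sinh_pow_succ {s : ℝ} (hs : 0 < s) :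
    m * cosh s * sinhPowIntegral m s < sinh s ^ (m + 1) := by
  have h := strictMonoOn_sinh_pow_succ_div_cosh_sub m self_mem_Ici hs.le hs
  simp only [sinh_zero, cosh_zero, zero_right, zero_pow m.succ_ne_zero, div_one, mul_zero,
    sub_zero, sub_pos] at h
  rwa [lt_div_iff₀ (cosh_pos s), mul_right_comm] at h

theorem hasDerivAt_div_sinh_pow {s : ℝ} (hs : s ≠ 0) :
    HasDerivAt (fun x => sinhPowIntegral m x / sinh x ^ m)
      (1 - m * cosh s * sinhPowIntegral m s / sinh s ^ (m + 1)) s := by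
  have hsinh : sinh s ≠ 0 := sinh_ne_zero.2 hs
  refine ((hasDerivAt m s).fun_div ((hasDerivAt_sinh s).fun_pow m)
    (pow_ne_zero m hsinh)).congr_deriv ?_
  rcases m with _ | m
  · simp
  · simp only [Nat.add_sub_cancel]
    field_simp
    ring

end sinhPowIntegral

theorem stmt2_general (n : ℕ) (s0 : ℝ)
    (φ : ℝ → ℝ)
    (hφ : ∀ s > (0:ℝ), φ s = (∫ u in (0:ℝ)..s, Real.sinh u ^ (n - 1)) / Real.sinh s ^ (n - 1)) :
    ∀ s ∈ Set.Ioc (0:ℝ) s0, 0 < deriv φ s := by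
  rintro s ⟨hs, -⟩
  have hφ_eq : φ =ᶠ[nhds s] fun x => sinhPowIntegral (n - 1) x / sinh x ^ (n - 1) :=
    Filter.eventually_of_mem (Ioi_mem_nhds hs) hφ
  rw [hφ_eq.deriv_eq, (sinhPowIntegral.hasDerivAt_div_sinh_pow (n - 1) hs.ne').deriv, sub_pos,
    div_lt_one (pow_pos (sinh_pos_iff.2 hs) _)]
  exact sinhPowIntegral.mul_cosh_mul_lt_sinh_pow_succ (n - 1) hs

theorem stmt2 (n : ℕ) (hn : 2 ≤ n) (s0 : ℝ) (hs0 : 0 < s0)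
    (φ : ℝ → ℝ) (hφ0 : φ 0 = 0)
    (hφ : ∀ s > (0:ℝ), φ s = (∫ u in (0:ℝ)..s, Real.sinh u ^ (n - 1)) / Real.sinh s ^ (n - 1)) :
    ∀ s ∈ Set.Ioc (0:ℝ) s0, 0 < deriv φ s :=
  stmt2_general n s0 φ hφ
end

section
/- The function φ(s) = (∫₀^s sin(u)^{n-1} du) / sin(s)^{n-1}, extended by φ(0) = 0, satisfies φ'(s) > 0 for all s in (0, s0], where 0 < s0 < π. -/
/-! With `m = n - 1` and `F(s) = ∫₀^s sin^m`, the quotient rule gives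
`φ'(s) = 1 - m cos s F(s) / sin^{m+1} s`. Since `cos` decreases on `[0, π]`,
`cos s F(s) ≤ ∫₀^s sin^m u cos u du = sin^{m+1} s / (m + 1)`, so
`m cos s F(s) ≤ m/(m+1) sin^{m+1} s < sin^{m+1} s`. -/

open Real intervalIntegral

theorem integral_sin_pow_mul_cos (m : ℕ) (s : ℝ) :
    ∫ u in (0:ℝ)..s, sin u ^ m * cos u = sin s ^ (m + 1) / (m + 1) := by
  simpa [integral_pow] using integral_sin_pow_mul_cos_pow_odd (a := 0) (b := s) m 0

theorem cos_mul_integral_sin_pow_le (m : ℕ) {s : ℝ} (hs : 0 ≤ s) (hsπ : s ≤ π) :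
    cos s * ∫ u in (0:ℝ)..s, sin u ^ m ≤ sin s ^ (m + 1) / (m + 1) := by
  rw [← integral_sin_pow_mul_cos, ← integral_const_mul]
  refine integral_mono_on hs ((by fun_prop : Continuous _).intervalIntegrable _ _)
    ((by fun_prop : Continuous _).intervalIntegrable _ _) fun u hu => ?_
  rw [mul_comm]
  exact mul_le_mul_of_nonneg_left (cos_le_cos_of_nonneg_of_le_pi hu.1 hsπ hu.2)
    (pow_nonneg (sin_nonneg_of_nonneg_of_le_pi hu.1 (hu.2.trans hsπ)) m)

theorem natCast_mul_cos_mul_integral_sin_pow_lt (m : ℕ) {s : ℝ} (hs : 0 < s) (hsπ : s < π) :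
    m * cos s * (∫ u in (0:ℝ)..s, sin u ^ m) < sin s ^ (m + 1) := by
  have hsin : 0 < sin s ^ (m + 1) := pow_pos (sin_pos_of_pos_of_lt_pi hs hsπ) _
  calc m * cos s * (∫ u in (0:ℝ)..s, sin u ^ m)
      ≤ m * (sin s ^ (m + 1) / (m + 1)) := by
        rw [mul_assoc]
        exact mul_le_mul_of_nonneg_left (cos_mul_integral_sin_pow_le m hs.le hsπ.le) m.cast_nonneg
    _ < sin s ^ (m + 1) := by
        rw [mul_div_left_comm, mul_div_assoc', div_lt_iff₀ (by positivity)]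
        linarith

theorem hasDerivAt_integral_sin_pow_div_sin_pow (m : ℕ) {s : ℝ} (hs : sin s ≠ 0) :
    HasDerivAt (fun t => (∫ u in (0:ℝ)..t, sin u ^ m) / sin t ^ m)
      (1 - m * cos s * (∫ u in (0:ℝ)..s, sin u ^ m) / sin s ^ (m + 1)) s := by
  have hcont : Continuous fun u => sin u ^ m := by fun_prop
  have hF : HasDerivAt (fun t => ∫ u in (0:ℝ)..t, sin u ^ m) (sin s ^ m) s :=
    integral_hasDerivAt_right (hcont.intervalIntegrable _ _)
      (hcont.stronglyMeasurableAtFilter _ _) hcont.continuousAt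
  refine (hF.div ((hasDerivAt_sin s).fun_pow m) (pow_ne_zero m hs)).congr_deriv ?_
  -- the exponent `m - 1` of the quotient rule truncates at `m = 0`
  rcases m with _ | m
  · simp
  · rw [Nat.add_sub_cancel]
    field_simp
    ring

theorem stmt3_general (n : ℕ) (s0 : ℝ) (hs0' : s0 < Real.pi)
    (φ : ℝ → ℝ)
    (hφ : ∀ s > (0:ℝ), φ s = (∫ u in (0:ℝ)..s, Real.sin u ^ (n - 1)) / Real.sin s ^ (n - 1)) :
    ∀ s ∈ Set.Ioc (0:ℝ) s0, 0 < deriv φ s := by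
  rintro s ⟨hs, hss0⟩
  have hsπ : s < π := hss0.trans_lt hs0'
  have hsin : 0 < sin s := sin_pos_of_pos_of_lt_pi hs hsπ
  have hφ_eq : φ =ᶠ[nhds s] fun t => (∫ u in (0:ℝ)..t, sin u ^ (n - 1)) / sin t ^ (n - 1) :=
    Filter.eventually_of_mem (Ioi_mem_nhds hs) hφ
  rw [hφ_eq.deriv_eq, (hasDerivAt_integral_sin_pow_div_sin_pow (n - 1) hsin.ne').deriv]
  exact sub_pos.2 <| (div_lt_one (pow_pos hsin _)).2 <|
    natCast_mul_cos_mul_integral_sin_pow_lt (n - 1) hs hsπ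

theorem stmt3 (n : ℕ) (hn : 2 ≤ n) (s0 : ℝ) (hs0 : 0 < s0) (hs0' : s0 < Real.pi)
    (φ : ℝ → ℝ) (hφ0 : φ 0 = 0)
    (hφ : ∀ s > (0:ℝ), φ s = (∫ u in (0:ℝ)..s, Real.sin u ^ (n - 1)) / Real.sin s ^ (n - 1)) :
    ∀ s ∈ Set.Ioc (0:ℝ) s0, 0 < deriv φ s :=
  stmt3_general n s0 hs0' φ hφ
end

section
/- For every integer n > 2 and every s in (0, s0] with s0 > 0, the quantity ω(s) = sinh^n(s) - (n-1)·cosh(s)·∫₀^s sinh^{n-1}(u) du is positive. -/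
/-! Writing `n = m + 1`, the quotient `ω(s) / cosh s = sinh^(m+1) s / cosh s - m ∫₀ˢ sinh^m`
vanishes at `0` and, by `cosh² - sinh² = 1`, has derivative `sinh^m s / cosh² s > 0` on `(0, ∞)`.
Hence it is positive for `s > 0`, and so is `ω(s)`. -/

open Real Set

noncomputable section

namespace SinhPow

def omegaDivCosh (m : ℕ) (s : ℝ) : ℝ :=
  sinh s ^ (m + 1) / cosh s - m * ∫ u in (0:ℝ)..s, sinh u ^ m

theorem omegaDivCosh_zero (m : ℕ) : omegaDivCosh m 0 = 0 := by
  simp [omegaDivCosh]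

theorem hasDerivAt_omegaDivCosh (m : ℕ) (x : ℝ) :
    HasDerivAt (omegaDivCosh m) (sinh x ^ m / cosh x ^ 2) x := by
  have hpow : HasDerivAt (fun s => sinh s ^ (m + 1)) ((m + 1 : ℕ) * sinh x ^ m * cosh x) x := by
    simpa using (hasDerivAt_sinh x).fun_pow (m + 1)
  have hint : HasDerivAt (fun s => ∫ u in (0:ℝ)..s, sinh u ^ m) (sinh x ^ m) x :=
    ((continuous_sinh.pow m).integral_hasStrictDerivAt 0 x).hasDerivAt
  refine ((hpow.div (hasDerivAt_cosh x) (cosh_pos x).ne').sub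
    (hint.const_mul (m : ℝ))).congr_deriv ?_
  have hc : cosh x ^ 2 = sinh x ^ 2 + 1 := cosh_sq x
  field_simp
  push_cast
  linear_combination sinh x ^ m * hc

theorem strictMonoOn_omegaDivCosh (m : ℕ) : StrictMonoOn (omegaDivCosh m) (Ici 0) := by
  have hcont : Continuous (omegaDivCosh m) :=
    continuous_iff_continuousAt.mpr fun x => (hasDerivAt_omegaDivCosh m x).continuousAt
  refine strictMonoOn_of_deriv_pos (convex_Ici 0) hcont.continuousOn fun x hx => ?_
  rw [interior_Ici] at hx
  rw [(hasDerivAt_omegaDivCosh m x).deriv]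
  exact div_pos (pow_pos (sinh_pos_iff.mpr hx) m) (pow_pos (cosh_pos x) 2)

theorem omegaDivCosh_pos (m : ℕ) {s : ℝ} (hs : 0 < s) : 0 < omegaDivCosh m s := by
  simpa [omegaDivCosh_zero] using
    strictMonoOn_omegaDivCosh m self_mem_Ici (mem_Ici.mpr hs.le) hs

theorem sinh_pow_sub_mul_cosh_mul_integral_pos (m : ℕ) {s : ℝ} (hs : 0 < s) :
    0 < sinh s ^ (m + 1) - m * cosh s * ∫ u in (0:ℝ)..s, sinh u ^ m := by
  have hω : sinh s ^ (m + 1) - m * cosh s * ∫ u in (0:ℝ)..s, sinh u ^ m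
      = cosh s * omegaDivCosh m s := by
    rw [omegaDivCosh]
    field_simp [(cosh_pos s).ne']
  rw [hω]
  exact mul_pos (cosh_pos s) (omegaDivCosh_pos m hs)

end SinhPow

end

theorem stmt8_general (n : ℕ) (hn : 2 < n) (s0 : ℝ) :
    ∀ s ∈ Set.Ioc (0:ℝ) s0,
      0 < Real.sinh s ^ n - ((n:ℝ) - 1) * Real.cosh s * ∫ u in (0:ℝ)..s, Real.sinh u ^ (n - 1) := by
  obtain ⟨m, rfl⟩ : ∃ m, n = m + 1 := ⟨n - 1, by omega⟩
  intro s hs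
  simpa using SinhPow.sinh_pow_sub_mul_cosh_mul_integral_pos m hs.1

theorem stmt8 (n : ℕ) (hn : 2 < n) (s0 : ℝ) (hs0 : 0 < s0) :
    ∀ s ∈ Set.Ioc (0:ℝ) s0,
      0 < Real.sinh s ^ n - ((n:ℝ) - 1) * Real.cosh s * ∫ u in (0:ℝ)..s, Real.sinh u ^ (n - 1) :=
  stmt8_general n hn s0
end

section
/- For n ≥ 2, the spherical function φ(s) = (∫₀^s sin(u)^{n-1} du)/sin(s)^{n-1} satisfies φ''(s) > 0 for all s in (0, π). -/
/-!
Write `I(t) = ∫₀ᵗ sin^m` with `m = n - 1`. Differentiating twice gives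
`φ'' = m (I (1 + m cos²) - sin^(m+1) cos) / sin^(m+2)`, so everything reduces to
`sin^(m+1) cos < I (1 + m cos²)` on `(0, π)`. That inequality holds because
`I - sin^(m+1) cos / (1 + m cos²)` vanishes at `0` and has derivative
`2 sin^(m+2) / (1 + m cos²)² > 0`.
-/

open Real Set

noncomputable def sinPowIntegral (m : ℕ) (t : ℝ) : ℝ :=
  ∫ u in (0:ℝ)..t, sin u ^ m

lemma hasDerivAt_sinPowIntegral (m : ℕ) (s : ℝ) :
    HasDerivAt (sinPowIntegral m) (sin s ^ m) s :=
  ((continuous_sin.pow m).integral_hasStrictDerivAt 0 s).hasDerivAt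

lemma hasDerivAt_sin_pow_succ (m : ℕ) (x : ℝ) :
    HasDerivAt (fun t => sin t ^ (m + 1)) ((m + 1) * sin x ^ m * cos x) x := by
  simpa using (hasDerivAt_sin x).fun_pow (m + 1)

lemma hasDerivAt_sinPowIntegral_sub_sin_pow_mul_cos_div (m : ℕ) (s : ℝ) :
    HasDerivAt (fun t => sinPowIntegral m t - sin t ^ (m + 1) * cos t / (1 + m * cos t ^ 2))
      (2 * sin s ^ (m + 2) / (1 + m * cos s ^ 2) ^ 2) s := by
  have hden_ne : 1 + (m : ℝ) * cos s ^ 2 ≠ 0 := by positivity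
  have hnum := (hasDerivAt_sin_pow_succ m s).fun_mul (hasDerivAt_cos s)
  have hden : HasDerivAt (fun t => 1 + (m : ℝ) * cos t ^ 2) (m * (2 * cos s * -sin s)) s := by
    simpa using (((hasDerivAt_cos s).fun_pow 2).const_mul (m : ℝ)).const_add 1
  refine ((hasDerivAt_sinPowIntegral m s).fun_sub (hnum.fun_div hden hden_ne)).congr_deriv ?_
  field_simp
  linear_combination (-sin s ^ m * (1 + m * cos s ^ 2)) * sin_sq s

lemma sin_pow_mul_cos_lt (m : ℕ) {s : ℝ} (hs0 : 0 < s) (hsπ : s < π) :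
    sin s ^ (m + 1) * cos s < sinPowIntegral m s * (1 + m * cos s ^ 2) := by
  set K := fun t => sinPowIntegral m t - sin t ^ (m + 1) * cos t / (1 + m * cos t ^ 2)
  have hK' := hasDerivAt_sinPowIntegral_sub_sin_pow_mul_cos_div m
  have hK : StrictMonoOn K (Icc 0 π) := by
    refine strictMonoOn_of_deriv_pos (convex_Icc 0 π)
      (fun t _ => (hK' t).continuousAt.continuousWithinAt) ?_
    intro x hx
    rw [interior_Icc] at hx
    have := sin_pos_of_pos_of_lt_pi hx.1 hx.2
    rw [(hK' x).deriv]
    positivity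
  have hK0 : K 0 = 0 := by simp [K, sinPowIntegral]
  have hKs : 0 < K s := hK0 ▸ hK (left_mem_Icc.2 pi_pos.le) ⟨hs0.le, hsπ.le⟩ hs0
  rw [← div_lt_iff₀ (by positivity)]
  exact sub_pos.1 hKs

lemma hasDerivAt_sinPowIntegral_div (m : ℕ) {x : ℝ} (hx : sin x ≠ 0) :
    HasDerivAt (fun t => sinPowIntegral m t / sin t ^ m)
      (1 - m * cos x * sinPowIntegral m x / sin x ^ (m + 1)) x := by
  have hden : HasDerivAt (fun t => sin t ^ m) (m * sin x ^ m * cos x / sin x) x := by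
    rcases m with _ | m
    · simpa using hasDerivAt_const x (1 : ℝ)
    · convert hasDerivAt_sin_pow_succ m x using 1
      push_cast
      field_simp
      ring
  refine ((hasDerivAt_sinPowIntegral m x).fun_div hden (pow_ne_zero m hx)).congr_deriv ?_
  field_simp
  ring

lemma hasDerivAt_one_sub_cos_mul_sinPowIntegral_div (m : ℕ) {x : ℝ} (hx : sin x ≠ 0) :
    HasDerivAt (fun t => 1 - m * cos t * sinPowIntegral m t / sin t ^ (m + 1))
      (m * (sinPowIntegral m x * (1 + m * cos x ^ 2) - sin x ^ (m + 1) * cos x)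
        / sin x ^ (m + 2)) x := by
  have hnum := ((hasDerivAt_cos x).const_mul (m : ℝ)).fun_mul (hasDerivAt_sinPowIntegral m x)
  have hden := hasDerivAt_sin_pow_succ m x
  refine ((hnum.fun_div hden (pow_ne_zero _ hx)).const_sub 1).congr_deriv ?_
  field_simp
  linear_combination (m * (sin x ^ (m + 1)) ^ 2 * sinPowIntegral m x) * sin_sq x

theorem stmt13 (n : ℕ) (hn : 2 ≤ n)
    (φ : ℝ → ℝ)
    (hφ : ∀ s ∈ Set.Ioo (0:ℝ) Real.pi,
      φ s = (∫ u in (0:ℝ)..s, Real.sin u ^ (n - 1)) / Real.sin s ^ (n - 1)) :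
    ∀ s ∈ Set.Ioo (0:ℝ) Real.pi, 0 < deriv (deriv φ) s := by
  set m := n - 1
  have hsin : ∀ x ∈ Ioo 0 π, 0 < sin x := fun x hx => sin_pos_of_pos_of_lt_pi hx.1 hx.2
  have hφ' : EqOn φ (fun t => sinPowIntegral m t / sin t ^ m) (Ioo 0 π) := hφ
  have hdφ : EqOn (deriv φ) (fun t => 1 - m * cos t * sinPowIntegral m t / sin t ^ (m + 1))
      (Ioo 0 π) := fun x hx =>
    (hφ'.deriv isOpen_Ioo hx).trans (hasDerivAt_sinPowIntegral_div m (hsin x hx).ne').deriv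
  intro s hs
  rw [hdφ.deriv isOpen_Ioo hs,
    (hasDerivAt_one_sub_cos_mul_sinPowIntegral_div m (hsin s hs).ne').deriv]
  have hm : (0 : ℝ) < m := by exact_mod_cast (by omega : 0 < m)
  have hkey := sub_pos.2 (sin_pow_mul_cos_lt m hs.1 hs.2)
  have := hsin s hs
  positivity
end

section
/- In the case n = 2, ε = 1 with φ(s) = (1 − cos s)/sin s: for all s, s0 with π/2 < s < s0 < π, the quantity φ'(s)·φ(s0) − φ'(s0)·φ(s) is negative (so the family F₁ of rotational CMC spheres in S²×ℝ fails the nesting criterion for large radii). -/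
/-!
Since `φ = tan (s / 2)`, we have `φ' = φ / sin`, so
`φ'(s) φ(s₀) - φ'(s₀) φ(s) = φ(s) φ(s₀) (1 / sin s - 1 / sin s₀)`.
Both values of `φ` are positive, and `sin` decreases on `[π/2, π]`, so the bracket is negative.
-/

open Real

theorem Real.sin_lt_sin_of_pi_div_two_le_of_lt {x y : ℝ} (hx : π / 2 ≤ x) (hy : y ≤ 3 * π / 2)
    (hxy : x < y) : sin y < sin x := by
  rw [← sin_pi_sub x, ← sin_pi_sub y]
  exact sin_lt_sin_of_lt_of_le_pi_div_two (by linarith) (by linarith) (by linarith)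

theorem hasDerivAt_one_sub_cos_div_sin {s : ℝ} (hs : sin s ≠ 0) :
    HasDerivAt (fun s => (1 - cos s) / sin s) ((1 - cos s) / sin s / sin s) s := by
  refine (((hasDerivAt_cos s).const_sub 1).div (hasDerivAt_sin s) hs).congr_deriv ?_
  field_simp
  linear_combination sin_sq_add_cos_sq s

theorem one_sub_cos_div_sin_pos {s : ℝ} (h₀ : 0 < s) (hπ : s < π) :
    0 < (1 - cos s) / sin s := by
  have hcos : cos s < 1 := by
    rw [← cos_zero]
    exact cos_lt_cos_of_nonneg_of_le_pi le_rfl hπ.le h₀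
  exact div_pos (by linarith) (sin_pos_of_pos_of_lt_pi h₀ hπ)

theorem stmt19 (φ : ℝ → ℝ) (hφ : ∀ s, φ s = (1 - Real.cos s) / Real.sin s) :
    ∀ s s0 : ℝ, Real.pi / 2 < s → s < s0 → s0 < Real.pi →
      deriv φ s * φ s0 - deriv φ s0 * φ s < 0 := by
  obtain rfl : φ = fun s => (1 - cos s) / sin s := funext hφ
  intro s s0 hs hss0 hs0
  have hs_pos : 0 < s := by linarith [pi_pos]
  have hsin_s : 0 < sin s := sin_pos_of_pos_of_lt_pi hs_pos (by linarith)
  have hsin_s0 : 0 < sin s0 := sin_pos_of_pos_of_lt_pi (by linarith) hs0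
  have hsin_lt : sin s0 < sin s :=
    sin_lt_sin_of_pi_div_two_le_of_lt hs.le (by linarith [pi_pos]) hss0
  have hφs := one_sub_cos_div_sin_pos hs_pos (by linarith)
  have hφs0 := one_sub_cos_div_sin_pos (by linarith) hs0
  rw [(hasDerivAt_one_sub_cos_div_sin hsin_s.ne').deriv,
    (hasDerivAt_one_sub_cos_div_sin hsin_s0.ne').deriv]
  set a := (1 - cos s) / sin s
  set b := (1 - cos s0) / sin s0
  calc a / sin s * b - b / sin s0 * a = a * b * (1 / sin s - 1 / sin s0) := by ring
    _ < 0 := mul_neg_of_pos_of_neg (mul_pos hφs hφs0)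
        (sub_neg.mpr (one_div_lt_one_div_of_lt hsin_s0 hsin_lt))
end
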